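/- Under the MFMC sampling scheme with nested sample sets of sizes r_{i-1}N and r_iN (r_0 = 1, r_{i-1} < r_i), the covariance matrix of the discrepancies \Delta_i = (1/(r_{i-1}N))\sum_{j=1}^{r_{i-1}N} Q_i(Z^{(j)}) - (1/(r_i N))\sum_{j=1}^{r_i N} Q_i(Z^{(j)}) is diagonal: for i \ne j, Cov[\Delta_i, \Delta_j] = 0, and Var[\Delta_i] = ((r_i - r_{i-1})/(r_i r_{i-1})) Var[Q_i]/N. -/

import Mathlib

open MeasureTheory ProbabilityTheory Finset

/-- Covariance of two real-valued random variables. -/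
noncomputable def cov {Ω : Type*} [MeasurableSpace Ω] (μ : Measure Ω) (X Y : Ω → ℝ) : ℝ :=
  ∫ ω, (X ω - ∫ x, X x ∂μ) * (Y ω - ∫ x, Y x ∂μ) ∂μ

section Aux
set_option linter.unusedSectionVars false
variable {Ω : Type*} [MeasurableSpace Ω] {μ : Measure Ω} [IsProbabilityMeasure μ]

lemma aux_int_mul {f g : Ω → ℝ} (hf : MemLp f 2 μ) (hg : MemLp g 2 μ) :
    Integrable (fun ω => f ω * g ω) μ := by
  rw [← memLp_one_iff_integrable]
  exact hg.smul hf (p := 2) (q := 2) (r := 1) (hpqr := ⟨by rw [inv_one]; exact ENNReal.inv_two_add_inv_two⟩)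

lemma aux_center_int {f : Ω → ℝ} (hf : MemLp f 2 μ) :
    ∫ ω, (f ω - ∫ x, f x ∂μ) ∂μ = 0 := by
  rw [integral_sub (hf.integrable one_le_two) (integrable_const _)]
  simp

lemma aux_cov_indep {f g : Ω → ℝ} (hf : MemLp f 2 μ) (hg : MemLp g 2 μ)
    (h : IndepFun f g μ) : cov μ f g = 0 := by
  have h' : IndepFun (fun ω => f ω - ∫ x, f x ∂μ) (fun ω => g ω - ∫ x, g x ∂μ) μ :=
    h.comp (measurable_id.sub_const _) (measurable_id.sub_const _)
  have hfi : Integrable (fun ω => f ω - ∫ x, f x ∂μ) μ :=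
    (hf.integrable one_le_two).sub (integrable_const _)
  have hgi : Integrable (fun ω => g ω - ∫ x, g x ∂μ) μ :=
    (hg.integrable one_le_two).sub (integrable_const _)
  have h0 : (∫ ω, (f ω - ∫ x, f x ∂μ) * (g ω - ∫ x, g x ∂μ) ∂μ) =
      (∫ ω, (f ω - ∫ x, f x ∂μ) ∂μ) * ∫ ω, (g ω - ∫ x, g x ∂μ) ∂μ :=
    h'.integral_mul_eq_mul_integral hfi.aestronglyMeasurable hgi.aestronglyMeasurable
  rw [cov, h0, aux_center_int hf, zero_mul]

lemma aux_cov_comm (f g : Ω → ℝ) : cov μ f g = cov μ g f := by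
  unfold cov; congr 1; ext ω; ring

lemma aux_cov_bilin {ι κ : Type*} (s : Finset ι) (t : Finset κ)
    (f : ι → Ω → ℝ) (g : κ → Ω → ℝ) (a : ι → ℝ) (b : κ → ℝ)
    (hf : ∀ k ∈ s, MemLp (f k) 2 μ) (hg : ∀ l ∈ t, MemLp (g l) 2 μ) :
    cov μ (fun ω => ∑ k ∈ s, a k * f k ω) (fun ω => ∑ l ∈ t, b l * g l ω) =
      ∑ k ∈ s, ∑ l ∈ t, a k * b l * cov μ (f k) (g l) := by
  have hfi : ∀ k ∈ s, Integrable (f k) μ := fun k hk => (hf k hk).integrable one_le_two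
  have hgi : ∀ l ∈ t, Integrable (g l) μ := fun l hl => (hg l hl).integrable one_le_two
  have hEs : (∫ ω, ∑ k ∈ s, a k * f k ω ∂μ) = ∑ k ∈ s, a k * ∫ x, f k x ∂μ := by
    rw [integral_finset_sum s (fun k hk => (hfi k hk).const_mul (a k))]
    simp_rw [integral_const_mul]
  have hEt : (∫ ω, ∑ l ∈ t, b l * g l ω ∂μ) = ∑ l ∈ t, b l * ∫ x, g l x ∂μ := by
    rw [integral_finset_sum t (fun l hl => (hgi l hl).const_mul (b l))]
    simp_rw [integral_const_mul]
  rw [cov, hEs, hEt]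
  have hkey : ∀ ω, ((∑ k ∈ s, a k * f k ω) - ∑ k ∈ s, a k * ∫ x, f k x ∂μ) *
      ((∑ l ∈ t, b l * g l ω) - ∑ l ∈ t, b l * ∫ x, g l x ∂μ) =
      ∑ k ∈ s, ∑ l ∈ t, (a k * b l) *
        ((f k ω - ∫ x, f k x ∂μ) * (g l ω - ∫ x, g l x ∂μ)) := by
    intro ω
    rw [← Finset.sum_sub_distrib, ← Finset.sum_sub_distrib, Finset.sum_mul_sum]
    apply Finset.sum_congr rfl; intro k _
    apply Finset.sum_congr rfl; intro l _
    ring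
  simp_rw [hkey]
  rw [integral_finset_sum]
  · apply Finset.sum_congr rfl; intro k hk
    rw [integral_finset_sum]
    · apply Finset.sum_congr rfl; intro l hl
      rw [integral_const_mul, cov]
    · intro l hl
      exact (aux_int_mul ((hf k hk).sub (memLp_const _)) ((hg l hl).sub (memLp_const _))).const_mul _
  · intro k hk
    apply integrable_finset_sum
    intro l hl
    exact (aux_int_mul ((hf k hk).sub (memLp_const _)) ((hg l hl).sub (memLp_const _))).const_mul _

lemma aux_var_eq_cov {f : Ω → ℝ} (hf : MemLp f 2 μ) : variance f μ = cov μ f f := by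
  rw [variance_eq_integral hf.aemeasurable, cov]
  congr 1; ext ω; simp [pow_two]

end Aux

section Sums

/-- coefficient function -/
noncomputable def cf (m n k : ℕ) : ℝ := (if k < m then (1/(m:ℝ)) else 0) - 1/(n:ℝ)

lemma aux_filter_lt (m n : ℕ) (hmn : m ≤ n) :
    (Finset.range n).filter (fun k => k < m) = Finset.range m := by
  ext k; simp only [Finset.mem_filter, Finset.mem_range]; omega

lemma aux_delta_sum (m n : ℕ) (hmn : m ≤ n) (X : ℕ → ℝ) :
    (1/(m:ℝ)) * ∑ j ∈ range m, X j - (1/(n:ℝ)) * ∑ j ∈ range n, X j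
      = ∑ k ∈ range n, cf m n k * X k := by
  simp_rw [cf, sub_mul, ite_mul, zero_mul]
  rw [Finset.sum_sub_distrib, ← Finset.sum_filter, aux_filter_lt m n hmn,
    Finset.mul_sum, Finset.mul_sum]

lemma aux_csum (m n : ℕ) (hm : 1 ≤ m) (hmn : m ≤ n) :
    ∑ k ∈ range n, cf m n k = 0 := by
  have hm0 : (m:ℝ) ≠ 0 := Nat.cast_ne_zero.2 (by omega)
  have hn0 : (n:ℝ) ≠ 0 := Nat.cast_ne_zero.2 (by omega)
  simp_rw [cf]
  rw [Finset.sum_sub_distrib, ← Finset.sum_filter, aux_filter_lt m n hmn,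
    Finset.sum_const, Finset.sum_const, Finset.card_range, Finset.card_range,
    nsmul_eq_mul, nsmul_eq_mul]
  field_simp
  ring

lemma aux_csq (m n : ℕ) (hm : 1 ≤ m) (hmn : m ≤ n) :
    ∑ k ∈ range n, cf m n k * cf m n k = 1/(m:ℝ) - 1/(n:ℝ) := by
  have hm0 : (m:ℝ) ≠ 0 := Nat.cast_ne_zero.2 (by omega)
  have hn0 : (n:ℝ) ≠ 0 := Nat.cast_ne_zero.2 (by omega)
  have h1 : ∀ k, cf m n k * cf m n k =
      if k < m then (1/(m:ℝ)-1/n)^2 else (1/(n:ℝ))^2 := by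
    intro k; rw [cf]; split_ifs <;> ring
  simp_rw [h1]
  rw [Finset.sum_ite, Finset.sum_const, Finset.sum_const, aux_filter_lt m n hmn,
    Finset.card_range]
  have h2 : ((range n).filter fun k => ¬ k < m) = Finset.Ico m n := by
    ext k; simp only [Finset.mem_filter, Finset.mem_range, Finset.mem_Ico]; omega
  rw [h2, Nat.card_Ico, nsmul_eq_mul, nsmul_eq_mul, Nat.cast_sub hmn]
  field_simp
  ring

end Sums

section Core
variable {Ω E : Type*} [MeasurableSpace Ω] [MeasurableSpace E]
    {μ : Measure Ω} [IsProbabilityMeasure μ]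

lemma aux_X_memL2 (Z : ℕ → Ω → E) (hident : ∀ j, IdentDistrib (Z j) (Z 0) μ μ)
    (Q : ℕ → E → ℝ) (hmQ : ∀ i, Measurable (Q i))
    (hL2 : ∀ i, MemLp (fun ω => Q i (Z 0 ω)) 2 μ) (i k : ℕ) :
    MemLp (fun ω => Q i (Z k ω)) 2 μ :=
  ((hident k).comp (hmQ i)).symm.memLp_snd (hL2 i)

lemma aux_cov_ident (Z : ℕ → Ω → E)
    (hident : ∀ j, IdentDistrib (Z j) (Z 0) μ μ)
    (Q : ℕ → E → ℝ) (hmQ : ∀ i, Measurable (Q i)) (i j k : ℕ) :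
    cov μ (fun ω => Q i (Z k ω)) (fun ω => Q j (Z k ω))
      = cov μ (fun ω => Q i (Z 0 ω)) (fun ω => Q j (Z 0 ω)) := by
  have hA : (∫ ω, Q i (Z k ω) ∂μ) = ∫ ω, Q i (Z 0 ω) ∂μ :=
    ((hident k).comp (hmQ i)).integral_eq
  have hB : (∫ ω, Q j (Z k ω) ∂μ) = ∫ ω, Q j (Z 0 ω) ∂μ :=
    ((hident k).comp (hmQ j)).integral_eq
  set A := ∫ ω, Q i (Z 0 ω) ∂μ
  set B := ∫ ω, Q j (Z 0 ω) ∂μ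
  have hφ : Measurable (fun x => (Q i x - A) * (Q j x - B)) :=
    ((hmQ i).sub measurable_const).mul ((hmQ j).sub measurable_const)
  have h := ((hident k).comp hφ).integral_eq
  rw [cov, cov, hA, hB]
  exact h

lemma aux_formula (Z : ℕ → Ω → E) (hmZ : ∀ j, Measurable (Z j))
    (hindep : iIndepFun Z μ)
    (hident : ∀ j, IdentDistrib (Z j) (Z 0) μ μ)
    (Q : ℕ → E → ℝ) (hmQ : ∀ i, Measurable (Q i))
    (hL2 : ∀ i, MemLp (fun ω => Q i (Z 0 ω)) 2 μ)
    (i j m n m' n' : ℕ) (hmn : m ≤ n) (hmn' : m' ≤ n') :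
    cov μ (fun ω => (1/(m:ℝ)) * ∑ k ∈ range m, Q i (Z k ω)
                    - (1/(n:ℝ)) * ∑ k ∈ range n, Q i (Z k ω))
          (fun ω => (1/(m':ℝ)) * ∑ k ∈ range m', Q j (Z k ω)
                    - (1/(n':ℝ)) * ∑ k ∈ range n', Q j (Z k ω))
      = (∑ k ∈ range (min n n'), cf m n k * cf m' n' k)
          * cov μ (fun ω => Q i (Z 0 ω)) (fun ω => Q j (Z 0 ω)) := by
  have hXL2 := aux_X_memL2 Z hident Q hmQ hL2
  have hrw1 : (fun ω => (1/(m:ℝ)) * ∑ k ∈ range m, Q i (Z k ω)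
      - (1/(n:ℝ)) * ∑ k ∈ range n, Q i (Z k ω))
      = fun ω => ∑ k ∈ range n, cf m n k * Q i (Z k ω) := by
    funext ω; exact aux_delta_sum m n hmn _
  have hrw2 : (fun ω => (1/(m':ℝ)) * ∑ k ∈ range m', Q j (Z k ω)
      - (1/(n':ℝ)) * ∑ k ∈ range n', Q j (Z k ω))
      = fun ω => ∑ k ∈ range n', cf m' n' k * Q j (Z k ω) := by
    funext ω; exact aux_delta_sum m' n' hmn' _
  rw [hrw1, hrw2]
  rw [aux_cov_bilin (range n) (range n') (fun k ω => Q i (Z k ω)) (fun l ω => Q j (Z l ω))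
    (cf m n) (cf m' n') (fun k _ => hXL2 i k) (fun l _ => hXL2 j l)]
  set σ := cov μ (fun ω => Q i (Z 0 ω)) (fun ω => Q j (Z 0 ω)) with hσ
  have hcov : ∀ k l, cov μ (fun ω => Q i (Z k ω)) (fun ω => Q j (Z l ω))
      = if k = l then σ else 0 := by
    intro k l
    by_cases hkl : k = l
    · subst hkl; rw [if_pos rfl, hσ]; exact aux_cov_ident Z hident Q hmQ i j k
    · rw [if_neg hkl]
      exact aux_cov_indep (hXL2 i k) (hXL2 j l)
        ((hindep.indepFun hkl).comp (hmQ i) (hmQ j))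
  simp_rw [hcov, mul_ite, mul_zero]
  rw [Finset.sum_comm]
  simp_rw [Finset.sum_ite_eq' (range n)]
  rw [← Finset.sum_filter]
  have : ((range n').filter fun l => l ∈ range n) = range (min n n') := by
    ext k; simp only [Finset.mem_filter, Finset.mem_range, lt_min_iff]; omega
  rw [this, ← Finset.sum_mul]

end Core


/-- Under the MFMC sampling scheme with nested sample sets of sizes `r_{i-1}N ⊂ r_i N`
drawn from i.i.d. inputs `Z⁽ʲ⁾`, the covariance matrix of the discrepancies
`Δᵢ = mean over r_{i-1}N of Qᵢ∘Z - mean over r_i N of Qᵢ∘Z` is diagonal with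
`Var[Δᵢ] = ((rᵢ - r_{i-1})/(rᵢ r_{i-1})) Var[Qᵢ]/N`. -/
theorem stmt14 {Ω E : Type*} [MeasurableSpace Ω] [MeasurableSpace E]
    (μ : Measure Ω) [IsProbabilityMeasure μ]
    (Z : ℕ → Ω → E) (hmZ : ∀ j, Measurable (Z j))
    (hindep : iIndepFun Z μ)
    (hident : ∀ j, IdentDistrib (Z j) (Z 0) μ μ)
    (M : ℕ) (Q : ℕ → E → ℝ) (hmQ : ∀ i, Measurable (Q i))
    (hL2 : ∀ i, MemLp (fun ω => Q i (Z 0 ω)) 2 μ)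
    (N : ℕ) (hN : 1 ≤ N) (r : ℕ → ℕ) (hr0 : r 0 = 1)
    (hrmono : ∀ i, 1 ≤ i → i ≤ M → r (i - 1) < r i)
    (Δ : ℕ → Ω → ℝ)
    (hΔ : ∀ i, Δ i = fun ω =>
      (1 / (r (i - 1) * N) : ℝ) * ∑ j ∈ Finset.range (r (i - 1) * N), Q i (Z j ω)
      - (1 / (r i * N) : ℝ) * ∑ j ∈ Finset.range (r i * N), Q i (Z j ω)) :
    (∀ i j, 1 ≤ i → i ≤ M → 1 ≤ j → j ≤ M → i ≠ j → cov μ (Δ i) (Δ j) = 0) ∧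
    (∀ i, 1 ≤ i → i ≤ M → variance (Δ i) μ =
      (((r i : ℝ) - r (i - 1)) / ((r i : ℝ) * r (i - 1)))
        * variance (fun ω => Q i (Z 0 ω)) μ / N) := by
  -- monotonicity of r on [0, M]
  have hmono : ∀ d a, a + d ≤ M → r a ≤ r (a + d) := by
    intro d
    induction d with
    | zero => intro a _; simp
    | succ d ih =>
      intro a h
      have h1 := ih a (by omega)
      have h2 := hrmono (a + d + 1) (by omega) (by omega)
      simp only [Nat.add_sub_cancel] at h2
      show r a ≤ r (a + d + 1)
      omega
  have hmono' : ∀ a b, a ≤ b → b ≤ M → r a ≤ r b := by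
    intro a b hab hbM
    have := hmono (b - a) a (by omega)
    rwa [Nat.add_sub_cancel' hab] at this
  have hr1 : ∀ i, i ≤ M → 1 ≤ r i := by
    intro i hi
    have := hmono' 0 i (Nat.zero_le _) hi
    omega
  -- recast Δ
  have hΔ' : ∀ i, Δ i = fun ω =>
      (1 / ((r (i - 1) * N : ℕ) : ℝ)) * ∑ j ∈ Finset.range (r (i - 1) * N), Q i (Z j ω)
      - (1 / ((r i * N : ℕ) : ℝ)) * ∑ j ∈ Finset.range (r i * N), Q i (Z j ω) := by
    intro i; rw [hΔ i]; push_cast; rfl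
  -- half off-diagonal claim
  have hoff : ∀ i j, 1 ≤ i → i ≤ M → j ≤ M → i < j → cov μ (Δ i) (Δ j) = 0 := by
    intro i j hi1 hiM hjM hij
    have hm : 1 ≤ r (i-1) * N := Nat.one_le_iff_ne_zero.2 (by
      have := hr1 (i-1) (by omega); positivity)
    have hmn : r (i-1) * N ≤ r i * N :=
      Nat.mul_le_mul_right N (le_of_lt (by simpa using hrmono i hi1 hiM))
    have hmn' : r (j-1) * N ≤ r j * N :=
      Nat.mul_le_mul_right N (le_of_lt (by simpa using hrmono j (by omega) hjM))
    have hnm' : r i * N ≤ r (j-1) * N :=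
      Nat.mul_le_mul_right N (hmono' i (j-1) (by omega) (by omega))
    rw [hΔ' i, hΔ' j,
      aux_formula Z hmZ hindep hident Q hmQ hL2 i j _ _ _ _ hmn hmn']
    rw [Nat.min_eq_left (le_trans hnm' hmn')]
    have hsum : ∑ k ∈ range (r i * N), cf (r (i-1) * N) (r i * N) k * cf (r (j-1) * N) (r j * N) k
        = (∑ k ∈ range (r i * N), cf (r (i-1) * N) (r i * N) k)
            * (1/((r (j-1) * N : ℕ):ℝ) - 1/((r j * N : ℕ):ℝ)) := by
      rw [Finset.sum_mul]
      apply Finset.sum_congr rfl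
      intro k hk
      congr 1
      rw [cf, if_pos]
      exact lt_of_lt_of_le (Finset.mem_range.1 hk) hnm'
    rw [hsum, aux_csum _ _ hm hmn, zero_mul, zero_mul]
  refine ⟨?_, ?_⟩
  · intro i j hi1 hiM hj1 hjM hij
    rcases lt_or_gt_of_ne hij with h | h
    · exact hoff i j hi1 hiM hjM h
    · rw [aux_cov_comm]; exact hoff j i hj1 hjM hiM h
  · intro i hi1 hiM
    have hriN : 1 ≤ r (i-1) := hr1 (i-1) (by omega)
    have hm : 1 ≤ r (i-1) * N := Nat.one_le_iff_ne_zero.2 (by positivity)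
    have hlt : r (i-1) < r i := by simpa using hrmono i hi1 hiM
    have hmn : r (i-1) * N ≤ r i * N := Nat.mul_le_mul_right N (le_of_lt hlt)
    have hXL2 := aux_X_memL2 Z hident Q hmQ hL2
    have hΔL2 : MemLp (Δ i) 2 μ := by
      rw [hΔ' i]
      exact ((memLp_finset_sum _ (fun k _ => hXL2 i k)).const_mul _).sub
        ((memLp_finset_sum _ (fun k _ => hXL2 i k)).const_mul _)
    rw [aux_var_eq_cov hΔL2, hΔ' i,
      aux_formula Z hmZ hindep hident Q hmQ hL2 i i _ _ _ _ hmn hmn,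
      Nat.min_self, aux_csq _ _ hm hmn, ← aux_var_eq_cov (hL2 i)]
    have ha : (0:ℝ) < r (i-1) := by exact_mod_cast hriN
    have hb : (0:ℝ) < r i := by
      have : 1 ≤ r i := le_trans hriN hlt.le
      exact_mod_cast Nat.lt_of_lt_of_le Nat.zero_lt_one this
    have hNc : (0:ℝ) < N := by exact_mod_cast hN
    have hcoef : (1/((r (i-1) * N : ℕ):ℝ) - 1/((r i * N : ℕ):ℝ))
        = ((r i : ℝ) - r (i-1)) / ((r i : ℝ) * r (i-1)) / N := by
      push_cast
      field_simp
    rw [hcoef]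
    ring
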